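/- arXiv:2011.10481 — 2 statements merged into one kernel-verified Lean document; each statement's English description precedes it below -/
import Mathlib

section
/- The five-node rule with nodes {−√15/5, −√15/10, 0, √15/10, √15/5}·δ (relative to center 0, with δ = 1) and weights {w₁², 2w₁w₂, 2w₁w₃+w₂², 2w₂w₃, w₃²}, where (w₁,w₂,w₃)=(5/18,4/9,5/18), exactly computes the double average (1/δ²)∫_{−δ/2}^{δ/2}∫_{x−δ/2}^{x+δ/2} p(ξ) dξ dx for all polynomials p of degree ≤ 4, with δ = 1. -/
/-!
Both sides are linear in `p`, so it suffices to compare them on the monomials `ξ ^ k`, `k ≤ 4`.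
The double average of `ξ ^ k` is `(1 + (-1) ^ k) / ((k + 1) * (k + 2))`, the `k`-th moment of the
hat kernel on `[-1, 1]`. The nodes and weights are the pairwise sums and products of those of the
three-point Gauss–Legendre rule on `[-1/2, 1/2]`, and the rule reproduces these five moments.
-/

open Real intervalIntegral

section

open Polynomial Finset

theorem integral_integral_pow (k : ℕ) :
    ∫ x in (-(1 / 2) : ℝ)..(1 / 2), ∫ ξ in (x - 1 / 2)..(x + 1 / 2), ξ ^ k =
      (1 + (-1) ^ k) / ((k + 1) * (k + 2)) := by
  simp_rw [integral_pow]
  rw [intervalIntegral.integral_div, integral_sub (Continuous.intervalIntegrable (by fun_prop) _ _)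
      (Continuous.intervalIntegrable (by fun_prop) _ _),
    integral_comp_add_right (· ^ (k + 1)), integral_comp_sub_right (· ^ (k + 1)),
    integral_pow, integral_pow]
  have hzero : (0 : ℝ) ^ (k + 2) = 0 := zero_pow (by omega)
  push_cast
  norm_num [hzero]
  field_simp
  ring

theorem integral_integral_eval {p : ℝ[X]} {n : ℕ} (hn : p.natDegree < n) :
    ∫ x in (-(1 / 2) : ℝ)..(1 / 2), ∫ ξ in (x - 1 / 2)..(x + 1 / 2), p.eval ξ =
      ∑ k ∈ range n, p.coeff k * ((1 + (-1) ^ k) / ((k + 1) * (k + 2))) := by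
  have inner (x : ℝ) : ∫ ξ in (x - 1 / 2)..(x + 1 / 2), p.eval ξ =
      ∑ k ∈ range n, p.coeff k * ∫ ξ in (x - 1 / 2)..(x + 1 / 2), ξ ^ k := by
    simp_rw [eval_eq_sum_range' hn, ← integral_const_mul]
    exact integral_finsetSum fun k _ => Continuous.intervalIntegrable (by fun_prop) _ _
  simp_rw [inner, ← integral_integral_pow, ← integral_const_mul]
  refine integral_finsetSum fun k _ => ?_
  simp_rw [integral_const_mul, integral_pow]
  exact Continuous.intervalIntegrable (by fun_prop) _ _

end

theorem five_node_rule_moment {k : ℕ} (hk : k < 5) :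
    (5 / 18 : ℝ) ^ 2 * (-(√15 / 5)) ^ k + 2 * (5 / 18) * (4 / 9) * (-(√15 / 10)) ^ k +
      (2 * (5 / 18) * (5 / 18) + (4 / 9) ^ 2) * 0 ^ k + 2 * (4 / 9) * (5 / 18) * (√15 / 10) ^ k +
      (5 / 18) ^ 2 * (√15 / 5) ^ k = (1 + (-1) ^ k) / ((k + 1) * (k + 2)) := by
  have hsq : √15 ^ 2 = 15 := sq_sqrt (by norm_num)
  have hfourth : √15 ^ 4 = 225 := by rw [show 4 = 2 * 2 from rfl, pow_mul, hsq]; norm_num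
  interval_cases k <;> ring_nf <;> norm_num [hsq, hfourth]

theorem five_node_double_average_exact (p : Polynomial ℝ) (hp : p.degree ≤ 4) :
    let w₁ : ℝ := 5 / 18
    let w₂ : ℝ := 4 / 9
    let w₃ : ℝ := 5 / 18
    w₁ ^ 2 * p.eval (-(Real.sqrt 15 / 5)) + 2 * w₁ * w₂ * p.eval (-(Real.sqrt 15 / 10)) +
      (2 * w₁ * w₃ + w₂ ^ 2) * p.eval 0 + 2 * w₂ * w₃ * p.eval (Real.sqrt 15 / 10) +
      w₃ ^ 2 * p.eval (Real.sqrt 15 / 5) =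
    ∫ x in (-(1 / 2) : ℝ)..(1 / 2), ∫ ξ in (x - 1 / 2)..(x + 1 / 2), p.eval ξ := by
  intro w₁ w₂ w₃
  have hn : p.natDegree < 5 := Nat.lt_succ_of_le (Polynomial.natDegree_le_iff_degree_le.mpr hp)
  rw [integral_integral_eval hn]
  simp only [Polynomial.eval_eq_sum_range' hn, Finset.mul_sum, ← Finset.sum_add_distrib]
  refine Finset.sum_congr rfl fun k hk => ?_
  linear_combination p.coeff k * five_node_rule_moment (Finset.mem_range.mp hk)
end

section
/- If u_{i−2},…,u_{i+2} ∈ ℝ are given double-cell averages and p(x) = Σ_{ℓ=0}^4 c_ℓ x^ℓ with c₀ = (1/180)(2u_{i−2} − 23u_{i−1} + 222u_i − 23u_{i+1} + 2u_{i+2}), c₁ = (1/8)(u_{i−2} − 6u_{i−1} + 6u_{i+1} − u_{i+2}), c₂ = (1/12)(−u_{i−2} + 10u_{i−1} − 18u_i + 10u_{i+1} − u_{i+2}), c₃ = (1/12)(−u_{i−2} + 2u_{i−1} − 2u_{i+1} + u_{i+2}), c₄ = (1/24)(u_{i−2} − 4u_{i−1} + 6u_i − 4u_{i+1} + u_{i+2}),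 then the double averages of p over the five unit cells centered at j = −2,−1,0,1,2 equal u_{i+j}: ∫_{j−1/2}^{j+1/2} ∫_{x−1/2}^{x+1/2} p(ξ) dξ dx = u_{i+j} for each j ∈ {−2,−1,0,1,2}. -/
open intervalIntegral

lemma weno_poly_int (a b k0 k1 k2 k3 k4 : ℝ) (f : ℝ → ℝ)
    (hf : ∀ x, f x = k0 + k1 * x + k2 * x ^ 2 + k3 * x ^ 3 + k4 * x ^ 4) :
    ∫ x in a..b, f x =
      k0 * (b - a) + k1 * (b ^ 2 - a ^ 2) / 2 + k2 * (b ^ 3 - a ^ 3) / 3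
        + k3 * (b ^ 4 - a ^ 4) / 4 + k4 * (b ^ 5 - a ^ 5) / 5 := by
  have hfe : f = fun x => k0 + k1 * x + k2 * x ^ 2 + k3 * x ^ 3 + k4 * x ^ 4 := funext hf
  have hcont : Continuous f := by rw [hfe]; continuity
  have key : ∀ x ∈ Set.uIcc a b,
      HasDerivAt (fun x => k0 * x + k1 * x ^ 2 / 2 + k2 * x ^ 3 / 3 + k3 * x ^ 4 / 4
        + k4 * x ^ 5 / 5) (f x) x := by
    intro x _
    have h1 : HasDerivAt (fun x : ℝ => k0 * x + k1 * x ^ 2 / 2 + k2 * x ^ 3 / 3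
        + k3 * x ^ 4 / 4 + k4 * x ^ 5 / 5)
        (k0 * 1 + k1 * (2 * x ^ 1) / 2 + k2 * (3 * x ^ 2) / 3 + k3 * (4 * x ^ 3) / 4
          + k4 * (5 * x ^ 4) / 5) x := by
      exact ((((((hasDerivAt_id x).const_mul k0).add
        (((hasDerivAt_pow 2 x).const_mul k1).div_const 2)).add
        (((hasDerivAt_pow 3 x).const_mul k2).div_const 3)).add
        (((hasDerivAt_pow 4 x).const_mul k3).div_const 4)).add
        (((hasDerivAt_pow 5 x).const_mul k4).div_const 5)).congr_deriv (by ring)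
    have : (k0 * 1 + k1 * (2 * x ^ 1) / 2 + k2 * (3 * x ^ 2) / 3 + k3 * (4 * x ^ 3) / 4
        + k4 * (5 * x ^ 4) / 5) = f x := by rw [hf]; ring
    rwa [this] at h1
  rw [intervalIntegral.integral_eq_sub_of_hasDerivAt key (hcont.intervalIntegrable a b)]
  ring

theorem weno_quartic_reconstruction_double_averages
    (um2 um1 u0 up1 up2 : ℝ)
    (c₀ c₁ c₂ c₃ c₄ : ℝ)
    (hc₀ : c₀ = (1 / 180) * (2 * um2 - 23 * um1 + 222 * u0 - 23 * up1 + 2 * up2))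
    (hc₁ : c₁ = (1 / 8) * (um2 - 6 * um1 + 6 * up1 - up2))
    (hc₂ : c₂ = (1 / 12) * (-um2 + 10 * um1 - 18 * u0 + 10 * up1 - up2))
    (hc₃ : c₃ = (1 / 12) * (-um2 + 2 * um1 - 2 * up1 + up2))
    (hc₄ : c₄ = (1 / 24) * (um2 - 4 * um1 + 6 * u0 - 4 * up1 + up2))
    (p : ℝ → ℝ)
    (hp : ∀ x, p x = c₀ + c₁ * x + c₂ * x ^ 2 + c₃ * x ^ 3 + c₄ * x ^ 4)
    (A : ℤ → ℝ)
    (hA : ∀ j : ℤ, A j = ∫ x in ((j : ℝ) - 1 / 2)..((j : ℝ) + 1 / 2),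
        ∫ ξ in (x - 1 / 2)..(x + 1 / 2), p ξ) :
    A (-2) = um2 ∧ A (-1) = um1 ∧ A 0 = u0 ∧ A 1 = up1 ∧ A 2 = up2 := by
  have inner : ∀ x : ℝ, (fun x : ℝ => ∫ ξ in (x - 1 / 2)..(x + 1 / 2), p ξ) x =
      (c₀ + c₂ / 12 + c₄ / 80) + (c₁ + c₃ / 4) * x + (c₂ + c₄ / 2) * x ^ 2
        + c₃ * x ^ 3 + c₄ * x ^ 4 := by
    intro x
    simp only
    rw [weno_poly_int (x - 1 / 2) (x + 1 / 2) c₀ c₁ c₂ c₃ c₄ p hp]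
    ring
  have outer : ∀ j : ℤ, A j =
      (c₀ + c₂ / 12 + c₄ / 80) * 1
      + (c₁ + c₃ / 4) * (((j : ℝ) + 1 / 2) ^ 2 - ((j : ℝ) - 1 / 2) ^ 2) / 2
      + (c₂ + c₄ / 2) * (((j : ℝ) + 1 / 2) ^ 3 - ((j : ℝ) - 1 / 2) ^ 3) / 3
      + c₃ * (((j : ℝ) + 1 / 2) ^ 4 - ((j : ℝ) - 1 / 2) ^ 4) / 4
      + c₄ * (((j : ℝ) + 1 / 2) ^ 5 - ((j : ℝ) - 1 / 2) ^ 5) / 5 := by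
    intro j
    rw [hA j, weno_poly_int _ _ _ _ _ _ _ _ inner]
    ring
  subst hc₀ hc₁ hc₂ hc₃ hc₄
  refine ⟨?_, ?_, ?_, ?_, ?_⟩ <;>
    · rw [outer]; push_cast; ring
end
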